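/- arXiv:2202.03923 — 3 statements merged into one kernel-verified Lean document; each statement's English description precedes it below -/
import Mathlib

section
/- Discrete Hodge decomposition in degree 0 (Proposition 3.4, r = 0): the space of discrete 0-forms on the periodic grid is the internal direct sum of the two orthogonal subspaces range(δ¹) and ker(Δ⁰). -/
/-- Discrete 0-forms on the periodic grid `ZMod N × ZMod M`. -/
abbrev Form0 (N M : ℕ) := ZMod N × ZMod M → ℝ
/-- Discrete 1-forms on the periodic grid `ZMod N × ZMod M`: pairs of functions. -/
abbrev Form1 (N M : ℕ) := (ZMod N × ZMod M → ℝ) × (ZMod N × ZMod M → ℝ)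
/-- Discrete 2-forms on the periodic grid `ZMod N × ZMod M`. -/
abbrev Form2 (N M : ℕ) := ZMod N × ZMod M → ℝ

/-- Discrete exterior derivative on 0-forms. -/
def d0 (N M : ℕ) : Form0 N M →ₗ[ℝ] Form1 N M where
  toFun φ := (fun p => φ (p.1 + 1, p.2) - φ p, fun p => φ (p.1, p.2 + 1) - φ p)
  map_add' φ ψ := by refine Prod.ext ?_ ?_ <;> funext p <;> simp <;> ring
  map_smul' c φ := by refine Prod.ext ?_ ?_ <;> funext p <;> simp <;> ring

/-- Discrete exterior derivative on 1-forms. -/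
def d1 (N M : ℕ) : Form1 N M →ₗ[ℝ] Form2 N M where
  toFun ω := fun p => (ω.2 (p.1 + 1, p.2) - ω.2 p) - (ω.1 (p.1, p.2 + 1) - ω.1 p)
  map_add' ω η := by funext p; simp; ring
  map_smul' c ω := by funext p; simp; ring

/-- Discrete codifferential on 1-forms. -/
def delta1 (N M : ℕ) : Form1 N M →ₗ[ℝ] Form0 N M where
  toFun ω := fun p => (ω.1 (p.1 - 1, p.2) - ω.1 p) + (ω.2 (p.1, p.2 - 1) - ω.2 p)
  map_add' ω η := by funext p; simp; ring
  map_smul' c ω := by funext p; simp; ring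

/-- Discrete codifferential on 2-forms. -/
def delta2 (N M : ℕ) : Form2 N M →ₗ[ℝ] Form1 N M where
  toFun ψ := (fun p => ψ p - ψ (p.1, p.2 - 1), fun p => ψ (p.1 - 1, p.2) - ψ p)
  map_add' ψ χ := by refine Prod.ext ?_ ?_ <;> funext p <;> simp <;> ring
  map_smul' c ψ := by refine Prod.ext ?_ ?_ <;> funext p <;> simp <;> ring

/-- Discrete Laplacian on 0-forms: `Δ⁰ = δ¹ ∘ d⁰`. -/
def lap0 (N M : ℕ) : Form0 N M →ₗ[ℝ] Form0 N M := delta1 N M ∘ₗ d0 N M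
/-- Discrete Laplacian on 1-forms: `Δ¹ = d⁰ ∘ δ¹ + δ² ∘ d¹`. -/
def lap1 (N M : ℕ) : Form1 N M →ₗ[ℝ] Form1 N M :=
  d0 N M ∘ₗ delta1 N M + delta2 N M ∘ₗ d1 N M
/-- Discrete Laplacian on 2-forms: `Δ² = d¹ ∘ δ²`. -/
def lap2 (N M : ℕ) : Form2 N M →ₗ[ℝ] Form2 N M := d1 N M ∘ₗ delta2 N M

/-- Inner product of two 0-forms (or two 2-forms). -/
def inner0 (N M : ℕ) [NeZero N] [NeZero M] (φ ψ : Form0 N M) : ℝ := ∑ p, φ p * ψ p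
/-- Inner product of two 1-forms. -/
def inner1 (N M : ℕ) [NeZero N] [NeZero M] (ω η : Form1 N M) : ℝ :=
  ∑ p, (ω.1 p * η.1 p + ω.2 p * η.2 p)

lemma adj0 (N M : ℕ) [NeZero N] [NeZero M] (ω : Form1 N M) (φ : Form0 N M) :
    inner0 N M (delta1 N M ω) φ = inner1 N M ω (d0 N M φ) := by
  simp only [inner0, inner1, delta1, d0, LinearMap.coe_mk, AddHom.coe_mk]
  have h1 : ∑ p : ZMod N × ZMod M, ω.1 (p.1 - 1, p.2) * φ p
      = ∑ p : ZMod N × ZMod M, ω.1 p * φ (p.1 + 1, p.2) := by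
    apply Fintype.sum_equiv (Equiv.prodCongr (Equiv.subRight (1 : ZMod N)) (Equiv.refl _))
    intro p
    show _ = ω.1 (p.1 - 1, p.2) * φ (p.1 - 1 + 1, p.2)
    rw [sub_add_cancel]
  have h2 : ∑ p : ZMod N × ZMod M, ω.2 (p.1, p.2 - 1) * φ p
      = ∑ p : ZMod N × ZMod M, ω.2 p * φ (p.1, p.2 + 1) := by
    apply Fintype.sum_equiv (Equiv.prodCongr (Equiv.refl _) (Equiv.subRight (1 : ZMod M)))
    intro p
    show _ = ω.2 (p.1, p.2 - 1) * φ (p.1, p.2 - 1 + 1)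
    rw [sub_add_cancel]
  simp only [sub_mul, add_mul, mul_sub, Finset.sum_add_distrib, Finset.sum_sub_distrib]
  rw [h1, h2]

lemma inner1_self_eq_zero (N M : ℕ) [NeZero N] [NeZero M] (ω : Form1 N M)
    (h : inner1 N M ω ω = 0) : ω = 0 := by
  have key : ∀ p : ZMod N × ZMod M, ω.1 p * ω.1 p + ω.2 p * ω.2 p = 0 := by
    have := (Finset.sum_eq_zero_iff_of_nonneg (fun p _ => add_nonneg (mul_self_nonneg _) (mul_self_nonneg _))).mp h
    intro p; exact this p (Finset.mem_univ p)
  have h1 : ∀ p, ω.1 p = 0 := fun p => by nlinarith [key p, sq_nonneg (ω.1 p), sq_nonneg (ω.2 p)]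
  have h2 : ∀ p, ω.2 p = 0 := fun p => by nlinarith [key p, sq_nonneg (ω.1 p), sq_nonneg (ω.2 p)]
  exact Prod.ext (funext h1) (funext h2)

lemma mem_ker_iff (N M : ℕ) [NeZero N] [NeZero M] (h : Form0 N M) :
    lap0 N M h = 0 ↔ d0 N M h = 0 := by
  constructor
  · intro hk
    apply inner1_self_eq_zero
    have := adj0 N M (d0 N M h) h
    rw [show delta1 N M (d0 N M h) = lap0 N M h from rfl, hk] at this
    rw [← this]; simp [inner0]
  · intro hd; simp [lap0, hd]

lemma ortho (N M : ℕ) [NeZero N] [NeZero M] :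
    ∀ a ∈ LinearMap.range (delta1 N M), ∀ h ∈ LinearMap.ker (lap0 N M),
      inner0 N M a h = 0 := by
  rintro a ⟨ω, rfl⟩ h hh
  rw [adj0, (mem_ker_iff N M h).mp (LinearMap.mem_ker.mp hh)]
  simp [inner1]

lemma inter_triv (N M : ℕ) [NeZero N] [NeZero M] (x : Form0 N M)
    (hx : x ∈ LinearMap.range (delta1 N M)) (hx' : x ∈ LinearMap.ker (lap0 N M)) :
    x = 0 := by
  have h0 : inner0 N M x x = 0 := ortho N M x hx x hx'
  funext p
  have key := (Finset.sum_eq_zero_iff_of_nonneg (fun q (_ : q ∈ Finset.univ) => mul_self_nonneg (x q))).mp h0 p (Finset.mem_univ p)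
  exact mul_self_eq_zero.mp key

lemma sup_top (N M : ℕ) [NeZero N] [NeZero M] :
    LinearMap.range (delta1 N M) ⊔ LinearMap.ker (lap0 N M) = ⊤ := by
  have hle : LinearMap.range (lap0 N M) ≤ LinearMap.range (delta1 N M) := by
    rintro x ⟨y, rfl⟩; exact ⟨d0 N M y, rfl⟩
  have hdisj : LinearMap.range (lap0 N M) ⊓ LinearMap.ker (lap0 N M) = ⊥ := by
    rw [eq_bot_iff]; rintro x ⟨h1, h2⟩
    exact inter_triv N M x (hle h1) h2
  have hdim := Submodule.finrank_sup_add_finrank_inf_eq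
    (LinearMap.range (lap0 N M)) (LinearMap.ker (lap0 N M))
  rw [hdisj, finrank_bot, add_zero] at hdim
  rw [LinearMap.finrank_range_add_finrank_ker (lap0 N M)] at hdim
  have htop : LinearMap.range (lap0 N M) ⊔ LinearMap.ker (lap0 N M) = ⊤ :=
    Submodule.eq_top_of_finrank_eq hdim
  rw [eq_top_iff, ← htop]
  exact sup_le_sup_right hle _

/-- **Discrete Hodge decomposition in degree 0** (Proposition 3.4, `r = 0`): the space of
discrete 0-forms on the periodic grid is the internal direct sum of the two orthogonal
subspaces `range(δ¹)` and `ker(Δ⁰)`. -/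
theorem discrete_hodge_decomposition_deg0 (N M : ℕ) [NeZero N] [NeZero M] :
    (∀ a ∈ LinearMap.range (delta1 N M), ∀ h ∈ LinearMap.ker (lap0 N M),
        inner0 N M a h = 0) ∧
    ∀ φ : Form0 N M,
      ∃! x : LinearMap.range (delta1 N M) × LinearMap.ker (lap0 N M),
        φ = (x.1 : Form0 N M) + (x.2 : Form0 N M) := by
  refine ⟨ortho N M, fun φ => ?_⟩
  have hφ : φ ∈ LinearMap.range (delta1 N M) ⊔ LinearMap.ker (lap0 N M) := by
    rw [sup_top]; trivial
  obtain ⟨a, ha, b, hb, hab⟩ := Submodule.mem_sup.mp hφ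
  refine ⟨(⟨a, ha⟩, ⟨b, hb⟩), hab.symm, ?_⟩
  rintro ⟨⟨a', ha'⟩, ⟨b', hb'⟩⟩ h'
  simp only at h'
  have h : a + b = a' + b' := hab.trans h'
  have hz : a' - a = b - b' := by
    rw [sub_eq_sub_iff_add_eq_add, ← h]; abel
  have h0 : a' - a = 0 := inter_triv N M _ (sub_mem ha' ha) (by rw [hz]; exact sub_mem hb hb')
  have ha0 : a' = a := sub_eq_zero.mp h0
  have hb0 : b' = b := by
    subst ha0
    exact (add_left_cancel h).symm
  refine Prod.ext (Subtype.ext ha0) (Subtype.ext hb0)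
end

section
/- Discrete Hodge decomposition in degree 2 (Proposition 3.4, r = 2): the space of discrete 2-forms on the periodic grid is the internal direct sum of the two orthogonal subspaces range(d¹) and ker(Δ²). -/
namespace LinearMap.IsAdjointPair

variable {K V W : Type*} [Field K] [AddCommGroup V] [Module K V] [AddCommGroup W] [Module K W]
  {B : LinearMap.BilinForm K V} {B' : LinearMap.BilinForm K W} {f : V →ₗ[K] W} {g : W →ₗ[K] V}

theorem ker_comp_eq_ker (h : IsAdjointPair B B' f g) (hB : ∀ x, B x x = 0 → x = 0) :
    ker (f ∘ₗ g) = ker g := by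
  refine le_antisymm (fun y hy => hB _ ?_) (ker_le_ker_comp g f)
  rw [← h, ← comp_apply f g, mem_ker.mp hy, map_zero, zero_apply]

theorem orthogonal_range_eq_ker (h : IsAdjointPair B B' f g) (hB : ∀ x, B x x = 0 → x = 0) :
    B'.orthogonal (range f) = ker g := by
  ext y
  simp only [BilinForm.mem_orthogonal_iff, mem_range, forall_exists_index, forall_apply_eq_imp_iff,
    h _ y, mem_ker]
  exact ⟨fun hy => hB _ (hy _), fun hy x => by rw [hy, map_zero]⟩

theorem isCompl_range_ker [FiniteDimensional K W] (h : IsAdjointPair B B' f g)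
    (hB : ∀ x, B x x = 0 → x = 0) (hB'refl : B'.IsRefl) (hB' : ∀ y, B' y y = 0 → y = 0) :
    IsCompl (range f) (ker g) := by
  rw [← h.orthogonal_range_eq_ker hB, BilinForm.isCompl_orthogonal_iff_disjoint hB'refl,
    Submodule.disjoint_def]
  exact fun y hy hy' => hB' y (hy' y hy)

end LinearMap.IsAdjointPair

theorem Fintype.sum_prod_add_fst {α β γ : Type*} [AddGroup α] [Fintype α] [Fintype β]
    [AddCommMonoid γ] (a : α) (f : α × β → γ) :
    ∑ p : α × β, f (p.1 + a, p.2) = ∑ p, f p :=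
  (Equiv.addRight a).prodCongr (Equiv.refl β) |>.sum_comp f

theorem Fintype.sum_prod_add_snd {α β γ : Type*} [Fintype α] [AddGroup β] [Fintype β]
    [AddCommMonoid γ] (b : β) (f : α × β → γ) :
    ∑ p : α × β, f (p.1, p.2 + b) = ∑ p, f p :=
  (Equiv.refl α).prodCongr (Equiv.addRight b) |>.sum_comp f

theorem dotProductBilin_isRefl {ι R : Type*} [Fintype ι] [CommSemiring R] :
    (dotProductBilin R R : LinearMap.BilinForm R (ι → R)).IsRefl :=
  fun v w h => by rwa [dotProductBilin_apply_apply, dotProduct_comm]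

section Grid

variable (N M : ℕ) [NeZero N] [NeZero M]

def inner1Bilin : LinearMap.BilinForm ℝ (Form1 N M) :=
  (dotProductBilin ℝ ℝ).compl₁₂ (LinearMap.fst ℝ _ _) (LinearMap.fst ℝ _ _) +
    (dotProductBilin ℝ ℝ).compl₁₂ (LinearMap.snd ℝ _ _) (LinearMap.snd ℝ _ _)

theorem inner1Bilin_apply (ω η : Form1 N M) : inner1Bilin N M ω η = inner1 N M ω η := by
  simp [inner1Bilin, inner1, dotProduct, Finset.sum_add_distrib]

theorem inner0_eq_dotProductBilin (φ ψ : Form2 N M) :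
    inner0 N M φ ψ = dotProductBilin ℝ ℝ φ ψ :=
  rfl

theorem isAdjointPair_d1_delta2 :
    LinearMap.IsAdjointPair (inner1Bilin N M) (dotProductBilin ℝ ℝ) (d1 N M) (delta2 N M) := by
  intro ω ψ
  have hfst := Fintype.sum_prod_add_fst (1 : ZMod N) fun p => ω.2 p * ψ (p.1 - 1, p.2)
  have hsnd := Fintype.sum_prod_add_snd (1 : ZMod M) fun p => ω.1 p * ψ (p.1, p.2 - 1)
  simp only [add_sub_cancel_right] at hfst hsnd
  simp only [dotProductBilin_apply_apply, dotProduct, inner1Bilin_apply, inner1, d1, delta2,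
    LinearMap.coe_mk, AddHom.coe_mk, sub_mul, mul_sub, Finset.sum_sub_distrib,
    Finset.sum_add_distrib, hfst, hsnd]
  ring

theorem eq_zero_of_inner1Bilin_self_eq_zero (ω : Form1 N M) (h : inner1Bilin N M ω ω = 0) :
    ω = 0 := by
  simp only [inner1Bilin, LinearMap.add_apply, LinearMap.compl₁₂_apply,
    dotProductBilin_apply_apply, LinearMap.fst_apply, LinearMap.snd_apply] at h
  have dotProduct_self_nonneg (v : ZMod N × ZMod M → ℝ) : 0 ≤ v ⬝ᵥ v :=
    Finset.sum_nonneg fun p _ => mul_self_nonneg (v p)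
  rw [add_eq_zero_iff_of_nonneg (dotProduct_self_nonneg _) (dotProduct_self_nonneg _),
    dotProduct_self_eq_zero, dotProduct_self_eq_zero] at h
  exact Prod.ext h.1 h.2

end Grid

/-- **Discrete Hodge decomposition in degree 2** (Proposition 3.4, `r = 2`): the space of
discrete 2-forms on the periodic grid is the internal direct sum of the two orthogonal
subspaces `range(d¹)` and `ker(Δ²)`. -/
theorem discrete_hodge_decomposition_deg2 (N M : ℕ) [NeZero N] [NeZero M] :
    (∀ a ∈ LinearMap.range (d1 N M), ∀ h ∈ LinearMap.ker (lap2 N M),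
        inner0 N M a h = 0) ∧
    ∀ ψ : Form2 N M,
      ∃! x : LinearMap.range (d1 N M) × LinearMap.ker (lap2 N M),
        ψ = (x.1 : Form2 N M) + (x.2 : Form2 N M) := by
  have hadj := isAdjointPair_d1_delta2 N M
  have hB := eq_zero_of_inner1Bilin_self_eq_zero N M
  have hker : LinearMap.ker (lap2 N M) = LinearMap.ker (delta2 N M) := hadj.ker_comp_eq_ker hB
  have horth : LinearMap.BilinForm.orthogonal (dotProductBilin ℝ ℝ)
      (LinearMap.range (d1 N M)) = LinearMap.ker (lap2 N M) := by
    rw [hker, hadj.orthogonal_range_eq_ker hB]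
  have hcompl : IsCompl (LinearMap.range (d1 N M)) (LinearMap.ker (lap2 N M)) := by
    rw [hker]
    exact hadj.isCompl_range_ker hB dotProductBilin_isRefl fun φ => dotProduct_self_eq_zero.mp
  refine ⟨fun a ha h hh => ?_, fun ψ => ?_⟩
  · rw [inner0_eq_dotProductBilin]
    exact (horth ▸ hh) a ha
  · simpa only [eq_comm] using Submodule.existsUnique_add_of_isCompl_prod hcompl ψ
end

section
/- Self-adjointness of the discrete Hodge–Dirac operator (Proposition 3.5): for all inhomogeneous discrete forms Φ = (φ₀, φ₁, φ₂) and Ω = (ω₀, ω₁, ω₂) on the periodic grid, ((d+δ)Φ, Ω) = (Φ, (d+δ)Ω), where the inner product of inhomogeneous forms is the sum of the three degree-wise inner products. -/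
/-- Inner product of inhomogeneous discrete forms: the sum of the degree-wise inner products. -/
def innerTot (N M : ℕ) [NeZero N] [NeZero M]
    (Φ Ω : Form0 N M × Form1 N M × Form2 N M) : ℝ :=
  inner0 N M Φ.1 Ω.1 + inner1 N M Φ.2.1 Ω.2.1 + inner0 N M Φ.2.2 Ω.2.2

/-- The discrete Hodge–Dirac operator on inhomogeneous forms:
`(d+δ)(ω₀, ω₁, ω₂) = (δ¹ω₁, d⁰ω₀ + δ²ω₂, d¹ω₁)`. -/
def hodgeDirac (N M : ℕ) (Ω : Form0 N M × Form1 N M × Form2 N M) :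
    Form0 N M × Form1 N M × Form2 N M :=
  (delta1 N M Ω.2.1, d0 N M Ω.1 + delta2 N M Ω.2.2, d1 N M Ω.2.1)

lemma shift1 {N M : ℕ} [NeZero N] [NeZero M] (f g : ZMod N × ZMod M → ℝ) :
    ∑ p : ZMod N × ZMod M, f (p.1 - 1, p.2) * g p
      = ∑ p : ZMod N × ZMod M, f p * g (p.1 + 1, p.2) :=
  Fintype.sum_equiv (Equiv.subRight ((1, 0) : ZMod N × ZMod M))
    (fun p => f (p.1 - 1, p.2) * g p) (fun q => f q * g (q.1 + 1, q.2))
    (fun ⟨x, y⟩ => by simp)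

lemma shift2 {N M : ℕ} [NeZero N] [NeZero M] (f g : ZMod N × ZMod M → ℝ) :
    ∑ p : ZMod N × ZMod M, f (p.1, p.2 - 1) * g p
      = ∑ p : ZMod N × ZMod M, f p * g (p.1, p.2 + 1) :=
  Fintype.sum_equiv (Equiv.subRight ((0, 1) : ZMod N × ZMod M))
    (fun p => f (p.1, p.2 - 1) * g p) (fun q => f q * g (q.1, q.2 + 1))
    (fun ⟨x, y⟩ => by simp) |>.symm.symm

lemma shift1' {N M : ℕ} [NeZero N] [NeZero M] (f g : ZMod N × ZMod M → ℝ) :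
    ∑ p : ZMod N × ZMod M, f (p.1 + 1, p.2) * g p
      = ∑ p : ZMod N × ZMod M, f p * g (p.1 - 1, p.2) :=
  Fintype.sum_equiv (Equiv.addRight ((1, 0) : ZMod N × ZMod M))
    (fun p => f (p.1 + 1, p.2) * g p) (fun q => f q * g (q.1 - 1, q.2))
    (fun ⟨x, y⟩ => by simp) |>.symm.symm

lemma shift2' {N M : ℕ} [NeZero N] [NeZero M] (f g : ZMod N × ZMod M → ℝ) :
    ∑ p : ZMod N × ZMod M, f (p.1, p.2 + 1) * g p
      = ∑ p : ZMod N × ZMod M, f p * g (p.1, p.2 - 1) :=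
  Fintype.sum_equiv (Equiv.addRight ((0, 1) : ZMod N × ZMod M))
    (fun p => f (p.1, p.2 + 1) * g p) (fun q => f q * g (q.1, q.2 - 1))
    (fun ⟨x, y⟩ => by simp) |>.symm.symm

lemma adj_d0 {N M : ℕ} [NeZero N] [NeZero M] (ω : Form1 N M) (φ : Form0 N M) :
    inner0 N M (delta1 N M ω) φ = inner1 N M ω (d0 N M φ) := by
  simp only [inner0, inner1, delta1, d0, LinearMap.coe_mk, AddHom.coe_mk]
  have h1 := shift1 ω.1 φ
  have h2 := shift2 ω.2 φ
  simp only [Finset.sum_sub_distrib, Finset.sum_add_distrib, sub_mul, add_mul,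
    mul_sub, mul_add] at *
  linarith

lemma adj_d1 {N M : ℕ} [NeZero N] [NeZero M] (ω : Form1 N M) (ψ : Form2 N M) :
    inner0 N M (d1 N M ω) ψ = inner1 N M ω (delta2 N M ψ) := by
  simp only [inner0, inner1, d1, delta2, LinearMap.coe_mk, AddHom.coe_mk]
  have h1 := shift2' ω.1 ψ
  have h2 := shift1' ω.2 ψ
  simp only [Finset.sum_sub_distrib, Finset.sum_add_distrib, sub_mul, add_mul,
    mul_sub, mul_add] at *
  linarith

lemma inner0_comm {N M : ℕ} [NeZero N] [NeZero M] (φ ψ : Form0 N M) :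
    inner0 N M φ ψ = inner0 N M ψ φ := by
  simp [inner0, mul_comm]

lemma inner1_comm {N M : ℕ} [NeZero N] [NeZero M] (ω η : Form1 N M) :
    inner1 N M ω η = inner1 N M η ω := by
  simp [inner1, mul_comm]

lemma inner1_add_left {N M : ℕ} [NeZero N] [NeZero M] (ω η ζ : Form1 N M) :
    inner1 N M (ω + η) ζ = inner1 N M ω ζ + inner1 N M η ζ := by
  simp only [inner1, Prod.fst_add, Prod.snd_add, Pi.add_apply, ← Finset.sum_add_distrib]
  exact Finset.sum_congr rfl (fun p _ => by ring)

/-- **Self-adjointness of the discrete Hodge–Dirac operator** (Proposition 3.5): for all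
inhomogeneous discrete forms `Φ` and `Ω` on the periodic grid,
`((d+δ)Φ, Ω) = (Φ, (d+δ)Ω)`. -/
theorem hodgeDirac_selfAdjoint (N M : ℕ) [NeZero N] [NeZero M]
    (Φ Ω : Form0 N M × Form1 N M × Form2 N M) :
    innerTot N M (hodgeDirac N M Φ) Ω = innerTot N M Φ (hodgeDirac N M Ω) := by
  obtain ⟨φ0, φ1, φ2⟩ := Φ
  obtain ⟨ω0, ω1, ω2⟩ := Ω
  simp only [innerTot, hodgeDirac]
  rw [inner1_add_left, adj_d0 φ1 ω0, adj_d1 φ1 ω2,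
    inner1_comm φ1 (d0 N M ω0 + delta2 N M ω2), inner1_add_left]
  linarith [adj_d0 ω1 φ0, adj_d1 ω1 φ2, inner1_comm (d0 N M φ0) ω1,
    inner1_comm (delta2 N M φ2) ω1, inner0_comm (delta1 N M ω1) φ0,
    inner0_comm (d1 N M ω1) φ2, inner1_comm (d0 N M ω0) φ1,
    inner1_comm (delta2 N M ω2) φ1]
end
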